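/- Let B : [0,T] × ℝ^d → ℝ^d be bounded and let X_1, X_2 be absolutely continuous flows on B_r with ∂_t X_i(t,x) = B(t, X_i(t,x)) and X_i(0,x) = x. Then with Φ_δ(t) = ∫_{B_r} log(1 + |X_1(t,x)-X_2(t,x)|/δ) dx one has Φ_δ(t) ≤ ∫_0^t ∫_{B_r} min{ 2||B||_∞/δ , |B(s,X_1(s,x)) - B(s,X_2(s,x))| / |X_1(s,x)-X_2(s,x)| } dx ds, where the quotient is interpreted as 0 when X_1 = X_2. -/

import Mathlib

/-!
Fix `x` and write `g s = ‖B(s, X₁ s x) - B(s, X₂ s x)‖`, `Z s = ‖X₁ s x - X₂ s x‖` and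
`A s = ∫₀ˢ g`. Subtracting the two integral equations gives `Z ≤ A`. The primitive `A` is
absolutely continuous and `log (δ + ·)` is Lipschitz on `[0, ∞)`, so `log (δ + A)` is absolutely
continuous with derivative `g / (δ + A)` a.e.; the fundamental theorem of calculus then gives
`log (1 + Z t / δ) ≤ log (1 + A t / δ) = ∫₀ᵗ g / (δ + A)`. The integrand is at most `2M/δ`, and
at most `g / Z` because `Z ≤ A` (when `Z = 0` also `g = 0`). Integrating over the ball and
exchanging the integrals by Tonelli proves the estimate.
-/

open MeasureTheory Metric Filter Set
open scoped ENNReal Topology NNReal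

theorem LipschitzOnWith.comp_absolutelyContinuousOnInterval {X Y : Type*}
    [PseudoMetricSpace X] [PseudoMetricSpace Y] {φ : X → Y} {f : ℝ → X} {K : ℝ≥0} {s : Set X}
    {a b : ℝ} (hφ : LipschitzOnWith K φ s) (hf : AbsolutelyContinuousOnInterval f a b)
    (hfs : MapsTo f (uIcc a b) s) : AbsolutelyContinuousOnInterval (φ ∘ f) a b := by
  have hK := Tendsto.const_mul (K : ℝ) hf
  rw [mul_zero] at hK
  refine squeeze_zero' (Eventually.of_forall fun E => Finset.sum_nonneg fun _ _ => dist_nonneg)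
    ?_ hK
  filter_upwards [mem_inf_of_right (mem_principal_self _)] with E hE
  rw [Finset.mul_sum]
  exact Finset.sum_le_sum fun i hi =>
    hφ.dist_le_mul _ (hfs (hE.1 i hi).1) _ (hfs (hE.1 i hi).2)

theorem Real.lipschitzOnWith_log_add {δ : ℝ} (hδ : 0 < δ) :
    LipschitzOnWith (Real.toNNReal δ⁻¹) (fun x => Real.log (δ + x)) (Ici 0) := by
  refine LipschitzOnWith.of_dist_le_mul fun x hx y hy => ?_
  wlog hxy : y ≤ x generalizing x y
  · rw [dist_comm, dist_comm x]; exact this y hy x hx (le_of_not_ge hxy)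
  have hx' : 0 < δ + x := by simp only [mem_Ici] at hx; linarith
  have hy' : 0 < δ + y := by simp only [mem_Ici] at hy; linarith
  have hlog : Real.log (δ + x) - Real.log (δ + y) ≤ (x - y) / (δ + y) := by
    have h := Real.log_le_sub_one_of_pos (div_pos hx' hy')
    rwa [Real.log_div hx'.ne' hy'.ne', div_sub_one hy'.ne', add_sub_add_left_eq_sub] at h
  have hmono : Real.log (δ + y) ≤ Real.log (δ + x) := Real.log_le_log hy' (by linarith)
  rw [Real.dist_eq, Real.dist_eq, abs_of_nonneg (sub_nonneg.2 hmono),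
    abs_of_nonneg (sub_nonneg.2 hxy), Real.coe_toNNReal _ (inv_nonneg.2 hδ.le), inv_mul_eq_div]
  exact hlog.trans (div_le_div_of_nonneg_left (sub_nonneg.2 hxy) hδ (by simpa using hy))

theorem integral_div_add_primitive_eq_log_sub_log {g : ℝ → ℝ} {a b δ : ℝ} (hab : a ≤ b)
    (hδ : 0 < δ) (hg : IntervalIntegrable g volume a b) (hg₀ : ∀ s ∈ Icc a b, 0 ≤ g s) :
    ∫ s in a..b, g s / (δ + ∫ u in a..s, g u) = Real.log (δ + ∫ u in a..b, g u) - Real.log δ := by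
  set A : ℝ → ℝ := fun s => ∫ u in a..s, g u
  have hA₀ : MapsTo A (uIcc a b) (Ici 0) := fun s hs => by
    rw [uIcc_of_le hab] at hs
    exact intervalIntegral.integral_nonneg hs.1 fun u hu => hg₀ u ⟨hu.1, hu.2.trans hs.2⟩
  have hA_ac : AbsolutelyContinuousOnInterval A a b :=
    hg.absolutelyContinuousOnInterval_intervalIntegral left_mem_uIcc
  have hlog_ac := (Real.lipschitzOnWith_log_add hδ).comp_absolutelyContinuousOnInterval hA_ac hA₀
  have hderiv : ∀ᵐ s, s ∈ uIoc a b →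
      g s / (δ + A s) = deriv ((fun x => Real.log (δ + x)) ∘ A) s := by
    filter_upwards [hg.ae_hasDerivAt_integral] with s hs hsab
    have hs' := uIoc_subset_uIcc hsab
    have hpos : 0 < δ + A s := add_pos_of_pos_of_nonneg hδ (hA₀ hs')
    exact (((hs hs' a left_mem_uIcc).const_add δ).log hpos.ne').deriv.symm
  calc ∫ s in a..b, g s / (δ + A s)
      = ∫ s in a..b, deriv ((fun x => Real.log (δ + x)) ∘ A) s :=
        intervalIntegral.integral_congr_ae hderiv
    _ = Real.log (δ + A b) - Real.log (δ + A a) := hlog_ac.integral_deriv_eq_sub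
    _ = Real.log (δ + A b) - Real.log δ := by
        rw [show A a = 0 from intervalIntegral.integral_same, add_zero]

theorem ofReal_log_one_add_div_le_lintegral_min {g Z : ℝ → ℝ} {t δ C : ℝ} (ht : 0 ≤ t)
    (hδ : 0 < δ) (hg : IntervalIntegrable g volume 0 t) (hg₀ : ∀ s ∈ Icc 0 t, 0 ≤ g s)
    (hgC : ∀ s ∈ Icc 0 t, g s ≤ C) (hZ₀ : ∀ s ∈ Icc 0 t, 0 ≤ Z s)
    (hgZ : ∀ s ∈ Icc 0 t, Z s = 0 → g s = 0)
    (hZg : ∀ s ∈ Icc 0 t, Z s ≤ ∫ u in 0..s, g u) :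
    ENNReal.ofReal (Real.log (1 + Z t / δ)) ≤
      ∫⁻ s in Ioc 0 t, ENNReal.ofReal (min (C / δ) (g s / Z s)) := by
  set A : ℝ → ℝ := fun s => ∫ u in 0..s, g u
  set F : ℝ → ℝ := fun s => g s / (δ + A s)
  have hA₀ : ∀ s ∈ Icc 0 t, 0 ≤ A s := fun s hs =>
    intervalIntegral.integral_nonneg hs.1 fun u hu => hg₀ u ⟨hu.1, hu.2.trans hs.2⟩
  have htt : t ∈ Icc 0 t := right_mem_Icc.2 ht
  have hF₀ : ∀ s ∈ Icc 0 t, 0 ≤ F s := fun s hs =>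
    div_nonneg (hg₀ s hs) (add_nonneg hδ.le (hA₀ s hs))
  have hF_le_div : ∀ s ∈ Icc 0 t, F s ≤ g s / δ := fun s hs =>
    div_le_div_of_nonneg_left (hg₀ s hs) hδ (le_add_of_nonneg_right (hA₀ s hs))
  have hF_le : ∀ s ∈ Icc 0 t, F s ≤ min (C / δ) (g s / Z s) := by
    intro s hs
    refine le_min ((hF_le_div s hs).trans (div_le_div_of_nonneg_right (hgC s hs) hδ.le)) ?_
    rcases (hZ₀ s hs).eq_or_lt with hZ | hZ
    · simp [F, hgZ s hs hZ.symm]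
    · exact div_le_div_of_nonneg_left (hg₀ s hs) hZ (by linarith [hZg s hs])
  have hF_int : IntegrableOn F (Ioc 0 t) := by
    refine Integrable.mono' (hg.1.div_const δ) ?_ ?_
    · have hA : ContinuousOn A (Ioc 0 t) :=
        (intervalIntegral.continuousOn_primitive_interval' hg left_mem_uIcc).mono
          (Ioc_subset_Icc_self.trans (uIcc_of_le ht).symm.subset)
      exact hg.1.aestronglyMeasurable.div₀
        ((continuousOn_const.add hA).aestronglyMeasurable measurableSet_Ioc)
    · refine (ae_restrict_iff' measurableSet_Ioc).2 (ae_of_all _ fun s hs => ?_)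
      have hs' := Ioc_subset_Icc_self hs
      rw [Real.norm_of_nonneg (hF₀ s hs')]
      exact hF_le_div s hs'
  have hlog : Real.log (1 + Z t / δ) ≤ ∫ s in Ioc 0 t, F s := by
    have hδA : 0 < δ + A t := add_pos_of_pos_of_nonneg hδ (hA₀ t htt)
    rw [← intervalIntegral.integral_of_le ht,
      integral_div_add_primitive_eq_log_sub_log ht hδ hg hg₀, ← Real.log_div hδA.ne' hδ.ne',
      add_div, div_self hδ.ne']
    gcongr
    · have := hZ₀ t htt; positivity
    · exact hZg t htt
  calc ENNReal.ofReal (Real.log (1 + Z t / δ))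
      ≤ ENNReal.ofReal (∫ s in Ioc 0 t, F s) := ENNReal.ofReal_le_ofReal hlog
    _ = ∫⁻ s in Ioc 0 t, ENNReal.ofReal (F s) :=
        ofReal_integral_eq_lintegral_ofReal hF_int
          ((ae_restrict_iff' measurableSet_Ioc).2
            (ae_of_all _ fun s hs => hF₀ s (Ioc_subset_Icc_self hs)))
    _ ≤ ∫⁻ s in Ioc 0 t, ENNReal.ofReal (min (C / δ) (g s / Z s)) :=
        setLIntegral_mono' measurableSet_Ioc fun s hs =>
          ENNReal.ofReal_le_ofReal (hF_le s (Ioc_subset_Icc_self hs))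

theorem norm_sub_le_integral_norm_sub_of_eq_add_integral {E : Type*} [NormedAddCommGroup E]
    [NormedSpace ℝ E] {b₁ b₂ : ℝ → E} {x y₁ y₂ : E} {a s : ℝ} (has : a ≤ s)
    (hb₁ : IntervalIntegrable b₁ volume a s) (hb₂ : IntervalIntegrable b₂ volume a s)
    (hy₁ : y₁ = x + ∫ u in a..s, b₁ u) (hy₂ : y₂ = x + ∫ u in a..s, b₂ u) :
    ‖y₁ - y₂‖ ≤ ∫ u in a..s, ‖b₁ u - b₂ u‖ := by
  rw [hy₁, hy₂, add_sub_add_left_eq_sub, ← intervalIntegral.integral_sub hb₁ hb₂]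
  exact intervalIntegral.norm_integral_le_integral_norm has

theorem stmt14_general (d : ℕ) (T r δ M : ℝ)
    (hδ₀ : 0 < δ)
    (B : ℝ → EuclideanSpace ℝ (Fin d) → EuclideanSpace ℝ (Fin d))
    (hBbd : ∀ t x, ‖B t x‖ ≤ M)
    (hBm : Measurable (Function.uncurry B))
    (X₁ X₂ : ℝ → EuclideanSpace ℝ (Fin d) → EuclideanSpace ℝ (Fin d))
    (hm₁ : Measurable (Function.uncurry X₁)) (hm₂ : Measurable (Function.uncurry X₂))
    (hflow₁ : ∀ x ∈ Metric.ball (0 : EuclideanSpace ℝ (Fin d)) r, ∀ t ∈ Set.Icc 0 T,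
      X₁ t x = x + ∫ s in (0 : ℝ)..t, B s (X₁ s x))
    (hflow₂ : ∀ x ∈ Metric.ball (0 : EuclideanSpace ℝ (Fin d)) r, ∀ t ∈ Set.Icc 0 T,
      X₂ t x = x + ∫ s in (0 : ℝ)..t, B s (X₂ s x))
    (t : ℝ) (ht : t ∈ Set.Icc 0 T) :
    (∫⁻ x in Metric.ball (0 : EuclideanSpace ℝ (Fin d)) r,
        ENNReal.ofReal (Real.log (1 + ‖X₁ t x - X₂ t x‖ / δ)))
      ≤ ∫⁻ s in Set.Ioc (0 : ℝ) t,
          ∫⁻ x in Metric.ball (0 : EuclideanSpace ℝ (Fin d)) r,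
            ENNReal.ofReal (min (2 * M / δ)
              (‖B s (X₁ s x) - B s (X₂ s x)‖ / ‖X₁ s x - X₂ s x‖)) := by
  have hBX₁ : Measurable (Function.uncurry fun s x => B s (X₁ s x)) :=
    hBm.comp (measurable_fst.prodMk hm₁)
  have hBX₂ : Measurable (Function.uncurry fun s x => B s (X₂ s x)) :=
    hBm.comp (measurable_fst.prodMk hm₂)
  have hB_int : ∀ {Y : ℝ → EuclideanSpace ℝ (Fin d)} {a b : ℝ}, Measurable Y →
      IntervalIntegrable (fun s => B s (Y s)) volume a b := fun hY =>
    (intervalIntegrable_const (c := M)).mono_fun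
      (hBm.comp (measurable_id.prodMk hY)).aestronglyMeasurable
      (ae_of_all _ fun s => (hBbd s _).trans (Real.le_norm_self M))
  have hpointwise : ∀ x ∈ Metric.ball (0 : EuclideanSpace ℝ (Fin d)) r,
      ENNReal.ofReal (Real.log (1 + ‖X₁ t x - X₂ t x‖ / δ)) ≤
        ∫⁻ s in Set.Ioc (0 : ℝ) t, ENNReal.ofReal (min (2 * M / δ)
          (‖B s (X₁ s x) - B s (X₂ s x)‖ / ‖X₁ s x - X₂ s x‖)) := fun x hx =>
    ofReal_log_one_add_div_le_lintegral_min ht.1 hδ₀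
      ((hB_int hm₁.of_uncurry_right).sub (hB_int hm₂.of_uncurry_right)).norm
      (fun _ _ => norm_nonneg _)
      (fun s _ => (norm_sub_le_of_le (hBbd _ _) (hBbd _ _)).trans_eq (two_mul M).symm)
      (fun _ _ => norm_nonneg _)
      (fun s _ hs => by rw [norm_sub_eq_zero_iff.1 hs, sub_self, norm_zero])
      (fun s hs => norm_sub_le_integral_norm_sub_of_eq_add_integral hs.1
        (hB_int hm₁.of_uncurry_right) (hB_int hm₂.of_uncurry_right)
        (hflow₁ x hx s ⟨hs.1, hs.2.trans ht.2⟩) (hflow₂ x hx s ⟨hs.1, hs.2.trans ht.2⟩))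
  have hmeas : Measurable (Function.uncurry fun s x => ENNReal.ofReal (min (2 * M / δ)
      (‖B s (X₁ s x) - B s (X₂ s x)‖ / ‖X₁ s x - X₂ s x‖))) :=
    (measurable_const.min ((hBX₁.sub hBX₂).norm.div (hm₁.sub hm₂).norm)).ennreal_ofReal
  calc _ ≤ ∫⁻ x in Metric.ball (0 : EuclideanSpace ℝ (Fin d)) r, ∫⁻ s in Set.Ioc (0 : ℝ) t,
          ENNReal.ofReal (min (2 * M / δ)
            (‖B s (X₁ s x) - B s (X₂ s x)‖ / ‖X₁ s x - X₂ s x‖)) :=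
        setLIntegral_mono hmeas.lintegral_prod_left hpointwise
    _ = _ := lintegral_lintegral_swap (hmeas.comp measurable_swap).aemeasurable

theorem stmt14 (d : ℕ) (hd : 1 ≤ d) (T r δ M : ℝ) (hT : 0 ≤ T) (hr : 0 < r)
    (hδ₀ : 0 < δ) (hδ₁ : δ < 1)
    (B : ℝ → EuclideanSpace ℝ (Fin d) → EuclideanSpace ℝ (Fin d))
    (hBbd : ∀ t x, ‖B t x‖ ≤ M)
    (hBm : Measurable (Function.uncurry B))
    (X₁ X₂ : ℝ → EuclideanSpace ℝ (Fin d) → EuclideanSpace ℝ (Fin d))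
    (hm₁ : Measurable (Function.uncurry X₁)) (hm₂ : Measurable (Function.uncurry X₂))
    (hflow₁ : ∀ x ∈ Metric.ball (0 : EuclideanSpace ℝ (Fin d)) r, ∀ t ∈ Set.Icc 0 T,
      X₁ t x = x + ∫ s in (0 : ℝ)..t, B s (X₁ s x))
    (hflow₂ : ∀ x ∈ Metric.ball (0 : EuclideanSpace ℝ (Fin d)) r, ∀ t ∈ Set.Icc 0 T,
      X₂ t x = x + ∫ s in (0 : ℝ)..t, B s (X₂ s x))
    (t : ℝ) (ht : t ∈ Set.Icc 0 T) :
    (∫⁻ x in Metric.ball (0 : EuclideanSpace ℝ (Fin d)) r,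
        ENNReal.ofReal (Real.log (1 + ‖X₁ t x - X₂ t x‖ / δ)))
      ≤ ∫⁻ s in Set.Ioc (0 : ℝ) t,
          ∫⁻ x in Metric.ball (0 : EuclideanSpace ℝ (Fin d)) r,
            ENNReal.ofReal (min (2 * M / δ)
              (‖B s (X₁ s x) - B s (X₂ s x)‖ / ‖X₁ s x - X₂ s x‖)) :=
  stmt14_general d T r δ M hδ₀ B hBbd hBm X₁ X₂ hm₁ hm₂ hflow₁ hflow₂ t ht
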